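/- For natural numbers b and c, the following are equivalent: (1) α(b + c) ≤ b, and (2) there exists a multiset I of natural numbers of cardinality exactly b such that c = Σ_{i∈I} (2^i − 1). -/
import Mathlib

def alpha (n : ℕ) : ℕ := (Nat.digits 2 n).sum

lemma alpha_one : alpha 1 = 1 := by simp [alpha]

lemma alpha_two_mul (n : ℕ) : alpha (2 * n) = alpha n := by
  rcases Nat.eq_zero_or_pos n with h | h
  · simp [h]
  · unfold alpha
    rw [Nat.digits_def' (by norm_num : 1 < 2) (by omega)]
    simp [Nat.mul_div_cancel_left _ (by norm_num : 0 < 2), Nat.mul_mod_right]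

lemma alpha_two_mul_add_one (n : ℕ) : alpha (2 * n + 1) = alpha n + 1 := by
  unfold alpha
  rw [Nat.digits_def' (by norm_num : 1 < 2) (by omega)]
  have h1 : (2 * n + 1) % 2 = 1 := by omega
  have h2 : (2 * n + 1) / 2 = n := by omega
  rw [h1, h2]
  simp [Nat.add_comm]

lemma alpha_pow_two (i : ℕ) : alpha (2 ^ i) = 1 := by
  induction i with
  | zero => simpa using alpha_one
  | succ i ih => rw [pow_succ, mul_comm, alpha_two_mul]; exact ih

lemma alpha_add_le' : ∀ s m n : ℕ, m + n ≤ s → alpha (m + n) ≤ alpha m + alpha n := by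
  intro s
  induction s with
  | zero =>
    intro m n h
    have hm : m = 0 := by omega
    have hn : n = 0 := by omega
    simp [hm, hn]
  | succ s ih =>
    intro m n h
    rcases Nat.even_or_odd m with ⟨a, ha⟩ | ⟨a, ha⟩ <;>
      rcases Nat.even_or_odd n with ⟨b, hb⟩ | ⟨b, hb⟩
    · have h1 : m + n = 2 * (a + b) := by omega
      have h2 : a + b ≤ s := by omega
      rw [h1, alpha_two_mul, ha, hb]
      rw [show a + a = 2 * a by ring, show b + b = 2 * b by ring,
        alpha_two_mul, alpha_two_mul]
      exact ih a b h2
    · have h1 : m + n = 2 * (a + b) + 1 := by omega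
      have h2 : a + b ≤ s := by omega
      rw [h1, alpha_two_mul_add_one, ha, hb]
      rw [show a + a = 2 * a by ring, alpha_two_mul, alpha_two_mul_add_one]
      have := ih a b h2
      omega
    · have h1 : m + n = 2 * (a + b) + 1 := by omega
      have h2 : a + b ≤ s := by omega
      rw [h1, alpha_two_mul_add_one, ha, hb]
      rw [show b + b = 2 * b by ring, alpha_two_mul, alpha_two_mul_add_one]
      have := ih a b h2
      omega
    · have h1 : m + n = 2 * (a + b + 1) := by omega
      have h2 : a + b + 1 ≤ s := by omega
      have h3 : a + b ≤ s := by omega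
      rw [h1, alpha_two_mul, ha, hb, alpha_two_mul_add_one, alpha_two_mul_add_one]
      have e1 := ih (a + b) 1 (by omega)
      have e2 := ih a b h3
      rw [alpha_one] at e1
      omega

lemma alpha_add_le (m n : ℕ) : alpha (m + n) ≤ alpha m + alpha n :=
  alpha_add_le' (m + n) m n le_rfl

lemma alpha_sum_pow_le (J : Multiset ℕ) :
    alpha ((J.map (fun i => 2 ^ i)).sum) ≤ Multiset.card J := by
  induction J using Multiset.induction with
  | empty => simp [alpha]
  | cons a J ih =>
    simp only [Multiset.map_cons, Multiset.sum_cons, Multiset.card_cons]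
    calc alpha (2 ^ a + (J.map (fun i => 2 ^ i)).sum)
        ≤ alpha (2 ^ a) + alpha ((J.map (fun i => 2 ^ i)).sum) := alpha_add_le _ _
      _ ≤ 1 + Multiset.card J := by rw [alpha_pow_two]; omega
      _ = Multiset.card J + 1 := by omega

lemma exists_multiset_alpha (n : ℕ) : ∃ J : Multiset ℕ,
    Multiset.card J = alpha n ∧ (J.map (fun i => 2 ^ i)).sum = n := by
  induction n using Nat.strong_induction_on with
  | _ n ih =>
    rcases Nat.eq_zero_or_pos n with h | h
    · exact ⟨0, by simp [h, alpha]⟩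
    · rcases Nat.even_or_odd n with ⟨a, ha⟩ | ⟨a, ha⟩
      · have ha' : n = 2 * a := by omega
        obtain ⟨J, hc, hs⟩ := ih a (by omega)
        refine ⟨J.map (· + 1), ?_, ?_⟩
        · rw [Multiset.card_map, hc, ha', alpha_two_mul]
        · rw [Multiset.map_map, ha']
          have : ((fun i => 2 ^ i) ∘ (· + 1)) = (fun i => 2 * 2 ^ i) := by
            funext i; simp [pow_succ]; ring
          rw [this, Multiset.sum_map_mul_left (a := 2) (f := fun i => 2 ^ i) (s := J), hs]
      · have ha' : n = 2 * a + 1 := by omega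
        obtain ⟨J, hc, hs⟩ := ih a (by omega)
        refine ⟨0 ::ₘ J.map (· + 1), ?_, ?_⟩
        · simp [hc, ha', alpha_two_mul_add_one]
        · rw [Multiset.map_cons, Multiset.sum_cons, Multiset.map_map, ha']
          have : ((fun i => 2 ^ i) ∘ (· + 1)) = (fun i => 2 * 2 ^ i) := by
            funext i; simp [pow_succ]; ring
          rw [this, Multiset.sum_map_mul_left (a := 2) (f := fun i => 2 ^ i) (s := J), hs]
          omega

lemma exists_multiset_card : ∀ k n : ℕ, alpha n + k ≤ n →
    ∃ J : Multiset ℕ, Multiset.card J = alpha n + k ∧ (J.map (fun i => 2 ^ i)).sum = n := by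
  intro k
  induction k with
  | zero => intro n _; simpa using exists_multiset_alpha n
  | succ k ih =>
    intro n hn
    obtain ⟨J, hc, hs⟩ := ih n (by omega)
    have hlt : Multiset.card J < n := by omega
    have : ∃ i ∈ J, i ≠ 0 := by
      by_contra hcon
      push_neg at hcon
      have : J.map (fun i => 2 ^ i) = J.map (fun _ => 1) :=
        Multiset.map_congr rfl (fun i hi => by rw [hcon i hi]; rfl)
      rw [this] at hs
      simp [Multiset.map_const'] at hs
      omega
    obtain ⟨i, hi, hi0⟩ := this
    obtain ⟨J', hJ'⟩ := Multiset.exists_cons_of_mem hi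
    refine ⟨(i - 1) ::ₘ (i - 1) ::ₘ J', ?_, ?_⟩
    · simp only [Multiset.card_cons]
      rw [hJ'] at hc
      simp [Multiset.card_cons] at hc
      omega
    · simp only [Multiset.map_cons, Multiset.sum_cons]
      rw [hJ'] at hs
      simp only [Multiset.map_cons, Multiset.sum_cons] at hs
      have : 2 ^ (i - 1) * 2 = 2 ^ i := by
        rw [← pow_succ, Nat.sub_add_cancel (by omega)]
      omega

lemma sum_pred (I : Multiset ℕ) :
    (I.map (fun i => 2 ^ i - 1)).sum + Multiset.card I = (I.map (fun i => 2 ^ i)).sum := by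
  induction I using Multiset.induction with
  | empty => simp
  | cons a I ih =>
    simp only [Multiset.map_cons, Multiset.sum_cons, Multiset.card_cons]
    have : 1 ≤ 2 ^ a := Nat.one_le_two_pow
    omega

theorem alpha_le_iff_sum_pred_pow (b c : ℕ) :
    alpha (b + c) ≤ b ↔
      ∃ I : Multiset ℕ, Multiset.card I = b ∧ c = (I.map (fun i => 2 ^ i - 1)).sum := by
  constructor
  · intro h
    obtain ⟨k, hk⟩ := Nat.exists_eq_add_of_le h
    obtain ⟨J, hc, hs⟩ := exists_multiset_card k (b + c) (by omega)
    refine ⟨J, by omega, ?_⟩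
    have := sum_pred J
    omega
  · rintro ⟨I, hcard, hc⟩
    have hsum := sum_pred I
    have hbc : b + c = (I.map (fun i => 2 ^ i)).sum := by omega
    rw [hbc]
    calc alpha ((I.map (fun i => 2 ^ i)).sum) ≤ Multiset.card I := alpha_sum_pow_le I
      _ = b := hcard
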